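/- arXiv:2403.17930 — 3 statements merged into one kernel-verified Lean document; each statement's English description precedes it below -/
import Mathlib

section
/- If λ ≥ ω is a regular cardinal, P is an atomless λ-closed preorder, and p ∈ P, then there is an antichain of size λ contained in the set of elements below p. -/
/-!
Run a transfinite recursion of length `λ` below `p`: at stage `α`, `λ`-closure gives a common lower
bound of the first components chosen so far, and atomlessness splits it into an incompatible pair
`(x_α, y_α)`. For `α < β` we have `y_β ≤ x_α ⊥ y_α`, so the `y_α` form an antichain of size `λ`.
-/

open Cardinal

/-- `p` and `q` are incompatible in a preorder: no common lower bound. -/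
def Incomp {P : Type*} [Preorder P] (p q : P) : Prop := ¬ ∃ r, r ≤ p ∧ r ≤ q

/-- A preorder is `λ`-closed if every decreasing sequence of length `< λ`
has a lower bound. -/
def LambdaClosed (P : Type*) [Preorder P] (lam : Cardinal) : Prop :=
  ∀ γ : Ordinal, γ < lam.ord →
    ∀ f : {α : Ordinal // α < γ} → P,
      (∀ a b : {α : Ordinal // α < γ}, (a : Ordinal) < b → f b ≤ f a) →
      ∃ q : P, ∀ a, q ≤ f a

/-- A preorder is atomless: below every element there are two incompatible elements. -/
def AtomlessOrder (P : Type*) [Preorder P] : Prop :=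
  ∀ p : P, ∃ q, q ≤ p ∧ ∃ r, r ≤ p ∧ Incomp q r

universe u

variable {P : Type u} [Preorder P]

theorem Incomp.symm {p q : P} (h : Incomp p q) : Incomp q p :=
  fun ⟨r, hq, hp⟩ => h ⟨r, hp, hq⟩

theorem Incomp.mono {p q p' q' : P} (h : Incomp p q) (hp : p' ≤ p) (hq : q' ≤ q) :
    Incomp p' q' :=
  fun ⟨r, hrp, hrq⟩ => h ⟨r, hrp.trans hp, hrq.trans hq⟩

theorem Incomp.ne {p q : P} (h : Incomp p q) : p ≠ q := by
  rintro rfl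
  exact h ⟨p, le_rfl, le_rfl⟩

theorem LambdaClosed.exists_le_of_antitoneOn {lam : Cardinal} (hclosed : LambdaClosed P lam)
    {α : Ordinal} (hα : α < lam.ord) {x : Ordinal → P} (hx : AntitoneOn x (Set.Iio α))
    {p : P} (hxp : ∀ β < α, x β ≤ p) : ∃ b ≤ p, ∀ β < α, b ≤ x β := by
  rcases eq_zero_or_pos α with rfl | hα₀
  · exact ⟨p, le_rfl, fun β hβ => (not_lt_zero hβ).elim⟩
  obtain ⟨b, hb⟩ := hclosed α hα (fun β => x β) fun β γ hβγ => hx β.2 γ.2 hβγ.le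
  exact ⟨b, (hb ⟨0, hα₀⟩).trans (hxp 0 hα₀), fun β hβ => hb ⟨β, hβ⟩⟩

def IsSplitPairBelow (p : P) (x : Ordinal → P) (α : Ordinal) (z : P × P) : Prop :=
  z.1 ≤ p ∧ z.2 ≤ p ∧ Incomp z.1 z.2 ∧ ∀ β < α, z.1 ≤ x β ∧ z.2 ≤ x β

-- `ε` picks junk at a stage with no split pair; `isSplitPairBelow_splitSeq` rules that out below `λ`.
noncomputable def splitSeq (p : P) : Ordinal → P × P :=
  Ordinal.lt_wf.fix fun α prev =>
    @Classical.epsilon _ ⟨(p, p)⟩ fun z =>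
      z.1 ≤ p ∧ z.2 ≤ p ∧ Incomp z.1 z.2 ∧ ∀ β (hβ : β < α), z.1 ≤ (prev β hβ).1 ∧ z.2 ≤ (prev β hβ).1

theorem splitSeq_eq (p : P) (α : Ordinal) :
    splitSeq p α = @Classical.epsilon _ ⟨(p, p)⟩
      (IsSplitPairBelow p (fun β => (splitSeq p β).1) α) := by
  rw [splitSeq, WellFounded.fix_eq]
  rfl

theorem isSplitPairBelow_splitSeq {lam : Cardinal} (hclosed : LambdaClosed P lam)
    (hatomless : AtomlessOrder P) (p : P) :
    ∀ α < lam.ord, IsSplitPairBelow p (fun β => (splitSeq p β).1) α (splitSeq p α) := by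
  intro α
  induction α using WellFoundedLT.induction with
  | _ α ih =>
    intro hα
    have hprev : ∀ β < α, IsSplitPairBelow p (fun β => (splitSeq p β).1) β (splitSeq p β) :=
      fun β hβ => ih β hβ (hβ.trans hα)
    have hanti : AntitoneOn (fun β => (splitSeq p β).1) (Set.Iio α) := by
      intro β _ γ hγ hβγ
      rcases hβγ.lt_or_eq with hβγ | rfl
      · exact ((hprev γ hγ).2.2.2 β hβγ).1
      · exact le_rfl
    obtain ⟨b, hbp, hb⟩ :=
      hclosed.exists_le_of_antitoneOn hα hanti fun β hβ => (hprev β hβ).1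
    obtain ⟨q, hq, r, hr, hqr⟩ := hatomless b
    rw [splitSeq_eq]
    exact Classical.epsilon_spec
      ⟨(q, r), hq.trans hbp, hr.trans hbp, hqr, fun β hβ => ⟨hq.trans (hb β hβ), hr.trans (hb β hβ)⟩⟩

theorem incomp_of_lt_of_isSplitPairBelow {p : P} {z : Ordinal → P × P} {o : Ordinal}
    (hz : ∀ α < o, IsSplitPairBelow p (fun β => (z β).1) α (z α))
    {α β : Ordinal} (hαβ : α < β) (hβ : β < o) : Incomp (z α).2 (z β).2 :=
  ((hz α (hαβ.trans hβ)).2.2.1.mono ((hz β hβ).2.2.2 α hαβ).2 le_rfl).symm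

theorem exists_antichain_of_isSplitPairBelow {p : P} {z : Ordinal → P × P} {o : Ordinal}
    (hz : ∀ α < o, IsSplitPairBelow p (fun β => (z β).1) α (z α)) :
    ∃ A : Set P, (∀ q ∈ A, q ≤ p) ∧ A.Pairwise Incomp ∧ #A = o.card := by
  have hincomp : ∀ α ∈ Set.Iio o, ∀ β ∈ Set.Iio o, α ≠ β → Incomp (z α).2 (z β).2 := by
    intro α hα β hβ hne
    rcases hne.lt_or_gt with hαβ | hβα
    · exact incomp_of_lt_of_isSplitPairBelow hz hαβ hβ
    · exact (incomp_of_lt_of_isSplitPairBelow hz hβα hα).symm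
  have hinj : (Set.Iio o).InjOn fun α => (z α).2 := fun α hα β hβ hαβ =>
    of_not_not fun hne => (hincomp α hα β hβ hne).ne hαβ
  refine ⟨(fun α => (z α).2) '' Set.Iio o, ?_, ?_, ?_⟩
  · rintro _ ⟨α, hα, rfl⟩
    exact (hz α hα).2.1
  · rintro _ ⟨α, hα, rfl⟩ _ ⟨β, hβ, rfl⟩ hne
    exact hincomp α hα β hβ fun h => hne (by rw [h])
  · have hcard := mk_image_eq_of_injOn_lift _ _ hinj
    rw [Cardinal.mk_Iio_ordinal, lift_lift] at hcard
    exact lift_injective hcard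

theorem stmt2_general {P : Type*} [Preorder P] (lam : Cardinal)
    (hclosed : LambdaClosed P lam)
    (hatomless : AtomlessOrder P) (p : P) :
    ∃ A : Set P, (∀ q ∈ A, q ≤ p) ∧ A.Pairwise Incomp ∧ #A = lam := by
  simpa using exists_antichain_of_isSplitPairBelow (isSplitPairBelow_splitSeq hclosed hatomless p)

/-- If `λ ≥ ω` is regular, `P` is an atomless `λ`-closed preorder and `p ∈ P`, then
there is an antichain of size `λ` below `p`. -/
theorem stmt2 {P : Type*} [Preorder P] (lam : Cardinal)
    (hreg : lam.IsRegular) (hclosed : LambdaClosed P lam)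
    (hatomless : AtomlessOrder P) (p : P) :
    ∃ A : Set P, (∀ q ∈ A, q ≤ p) ∧ A.Pairwise Incomp ∧ #A = lam :=
  stmt2_general lam hclosed hatomless p
end

section
/- Let λ ≥ ω and κ ≥ 2 be cardinals with κ·λ > ω, let s be a bottom element added below the reversed tree ^{<λ}κ, and define Q to be the set of sequences φ ∈ ({s} ∪ ^{<λ}κ)^ω whose support supp(φ) = {i : φ_i ≠ s} is infinite, preordered by φ ≤ η iff for all but finitely many i ∈ supp(φ), i ∈ supp(η) and φ_i ⊇ η_i. Then Q is σ-closed: every decreasing ω-sequence in Q has a lower bound in Q. -/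
/-!
A decreasing sequence `f 0 ≥ f 1 ≥ ⋯` is diagonalised. For each `n`, all but finitely many
coordinates `i` satisfy `f n i ⊇ f m i` for every `m ≤ n`, simultaneously; since the support of
`f n` is infinite we can pick such an `i = I n ∈ supp (f n)` with `I` strictly increasing. The
sequence `ψ` that agrees with `f n` at `I n` and is `s` elsewhere has infinite support, and past
`I m` its only nontrivial coordinates are the `I n` with `n ≥ m`, where `ψ (I n) = f n (I n)`
extends `f m (I n)`. So `ψ ≤ f m` for every `m`.
-/

open Cardinal

universe u

/-- An element of the reversed tree `^{<λ}κ`: a function from an ordinal `α < λ`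
into (a set of size) `κ`. -/
structure TreeSeq (lam kap : Cardinal.{u}) : Type (u + 1) where
  dom : Ordinal.{u}
  hdom : dom < lam.ord
  fn : ∀ β : Ordinal.{u}, β < dom → kap.out

/-- `Ext φ ψ` means `φ ⊇ ψ`, i.e. `φ` extends `ψ` as a function. -/
def TreeSeq.Ext {lam kap : Cardinal.{u}} (φ ψ : TreeSeq lam kap) : Prop :=
  ∃ h : ψ.dom ≤ φ.dom, ∀ β (hb : β < ψ.dom), φ.fn β (hb.trans_le h) = ψ.fn β hb

/-- The support of a sequence in `({s} ∪ ^{<λ}κ)^ω`, where `none` plays the role of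
the bottom element `s`. -/
def suppQ {lam kap : Cardinal.{u}} (φ : ℕ → Option (TreeSeq lam kap)) : Set ℕ :=
  {i | φ i ≠ none}

/-- The preorder of the set `Q`: `φ ≤ η` iff for all but finitely many
`i ∈ supp(φ)`, `i ∈ supp(η)` and `φ_i ⊇ η_i`. -/
def QLE {lam kap : Cardinal.{u}} (φ η : ℕ → Option (TreeSeq lam kap)) : Prop :=
  ∃ j : ℕ, ∀ i ≥ j, ∀ a : TreeSeq lam kap, φ i = some a →
    ∃ b : TreeSeq lam kap, η i = some b ∧ a.Ext b

/-- The underlying set of `Q`: sequences in `({s} ∪ ^{<λ}κ)^ω` with infinite support. -/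
def QSet (lam kap : Cardinal.{u}) :=
  {φ : ℕ → Option (TreeSeq lam kap) // (suppQ φ).Infinite}

open Filter

namespace TreeSeq

variable {lam kap : Cardinal.{u}}

theorem Ext.refl (a : TreeSeq lam kap) : a.Ext a :=
  ⟨le_rfl, fun _ _ => rfl⟩

theorem Ext.trans {a b c : TreeSeq lam kap} (hab : a.Ext b) (hbc : b.Ext c) : a.Ext c :=
  ⟨hbc.1.trans hab.1, fun β hβ => (hab.2 β (hβ.trans_le hbc.1)).trans (hbc.2 β hβ)⟩

end TreeSeq

section QLE

variable {lam kap : Cardinal.{u}}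

/-- The order of `{s} ∪ ^{<λ}κ` (with `none` as `s`) that `QLE` compares coordinatewise. -/
def OptionExt (x y : Option (TreeSeq lam kap)) : Prop :=
  ∀ a, x = some a → ∃ b, y = some b ∧ a.Ext b

theorem OptionExt.refl (x : Option (TreeSeq lam kap)) : OptionExt x x :=
  fun a ha => ⟨a, ha, TreeSeq.Ext.refl a⟩

theorem OptionExt.trans {x y z : Option (TreeSeq lam kap)} (hxy : OptionExt x y)
    (hyz : OptionExt y z) : OptionExt x z := fun a ha =>
  let ⟨b, hb, hab⟩ := hxy a ha
  let ⟨c, hc, hbc⟩ := hyz b hb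
  ⟨c, hc, hab.trans hbc⟩

theorem qle_iff_eventually {φ η : ℕ → Option (TreeSeq lam kap)} :
    QLE φ η ↔ ∀ᶠ i in atTop, OptionExt (φ i) (η i) :=
  eventually_atTop.symm

theorem QLE.refl (φ : ℕ → Option (TreeSeq lam kap)) : QLE φ φ :=
  qle_iff_eventually.2 (Eventually.of_forall fun i => OptionExt.refl (φ i))

theorem QLE.trans {φ η θ : ℕ → Option (TreeSeq lam kap)} (hφη : QLE φ η) (hηθ : QLE η θ) :
    QLE φ θ :=
  qle_iff_eventually.2 <| (qle_iff_eventually.1 hφη).and (qle_iff_eventually.1 hηθ) |>.mono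
    fun _ h => h.1.trans h.2

theorem qle_of_le {g : ℕ → ℕ → Option (TreeSeq lam kap)} (hg : ∀ n, QLE (g (n + 1)) (g n))
    {m n : ℕ} (hmn : m ≤ n) : QLE (g n) (g m) := by
  induction hmn with
  | refl => exact QLE.refl _
  | step _ ih => exact (hg _).trans ih

theorem frequently_mem_suppQ_and_forall_le {g : ℕ → ℕ → Option (TreeSeq lam kap)}
    (hsupp : ∀ n, (suppQ (g n)).Infinite) (hg : ∀ n, QLE (g (n + 1)) (g n)) (n : ℕ) :
    ∃ᶠ i in atTop, i ∈ suppQ (g n) ∧ ∀ m ≤ n, OptionExt (g n i) (g m i) :=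
  (Nat.frequently_atTop_iff_infinite.2 (hsupp n)).and_eventually <|
    (eventually_all_finite (Set.finite_le_nat n)).2 fun _ hm =>
      qle_iff_eventually.1 (qle_of_le hg hm)

end QLE

section Diagonal

variable {T : Type*}

open Classical in
noncomputable def diagSeq (I : ℕ → ℕ) (g : ℕ → ℕ → Option T) (i : ℕ) : Option T :=
  if h : ∃ n, I n = i then g h.choose i else none

theorem diagSeq_apply_self {I : ℕ → ℕ} (hI : Function.Injective I) (g : ℕ → ℕ → Option T)
    (n : ℕ) : diagSeq I g (I n) = g n (I n) := by
  have h : ∃ m, I m = I n := ⟨n, rfl⟩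
  rw [diagSeq, dif_pos h, hI h.choose_spec]

theorem exists_eq_of_diagSeq_eq_some {I : ℕ → ℕ} {g : ℕ → ℕ → Option T} {i : ℕ} {a : T}
    (ha : diagSeq I g i = some a) : ∃ n, I n = i := by
  by_contra h
  rw [diagSeq, dif_neg h] at ha
  exact Option.some_ne_none a ha.symm

end Diagonal

section LowerBound

variable {lam kap : Cardinal.{u}} {g : ℕ → ℕ → Option (TreeSeq lam kap)} {I : ℕ → ℕ}

theorem suppQ_diagSeq_infinite (hI : StrictMono I) (hsupp : ∀ n, I n ∈ suppQ (g n)) :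
    (suppQ (diagSeq I g)).Infinite :=
  Set.infinite_of_injective_forall_mem hI.injective fun n =>
    show diagSeq I g (I n) ≠ none by rw [diagSeq_apply_self hI.injective]; exact hsupp n

theorem qle_diagSeq (hI : StrictMono I) (hext : ∀ n, ∀ m ≤ n, OptionExt (g n (I n)) (g m (I n)))
    (m : ℕ) : QLE (diagSeq I g) (g m) := by
  refine ⟨I m, fun i hi a ha => ?_⟩
  obtain ⟨n, rfl⟩ := exists_eq_of_diagSeq_eq_some ha
  rw [diagSeq_apply_self hI.injective] at ha
  exact hext n m (hI.le_iff_le.1 hi) a ha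

end LowerBound

theorem stmt9_general (l k : Cardinal.{u})
    (f : ℕ → QSet l k) (hdec : ∀ n : ℕ, QLE (f (n + 1)).1 (f n).1) :
    ∃ ψ : QSet l k, ∀ n : ℕ, QLE ψ.1 (f n).1 := by
  obtain ⟨I, hI, hIf⟩ := extraction_forall_of_frequently
    (frequently_mem_suppQ_and_forall_le (fun n => (f n).2) hdec)
  exact ⟨⟨diagSeq I (fun n => (f n).1), suppQ_diagSeq_infinite hI fun n => (hIf n).1⟩,
    qle_diagSeq hI fun n => (hIf n).2⟩

/-- For cardinals `λ ≥ ω`, `κ ≥ 2` with `κ·λ > ω`, the preorder `Q` is σ-closed: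
every decreasing ω-sequence in `Q` has a lower bound in `Q`. -/
theorem stmt9 (l k : Cardinal.{u}) (hl : ℵ₀ ≤ l) (hk : 2 ≤ k) (hkl : ℵ₀ < k * l)
    (f : ℕ → QSet l k) (hdec : ∀ n : ℕ, QLE (f (n + 1)).1 (f n).1) :
    ∃ ψ : QSet l k, ∀ n : ℕ, QLE ψ.1 (f n).1 :=
  stmt9_general l k f hdec
end

section
/- For every singular cardinal κ there is a family 𝒜 of subsets of κ, each of size cf(κ), with |𝒜| = κ⁺, such that any two distinct members of 𝒜 have intersection of size < cf(κ). -/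
open Cardinal Set

universe u

/-!
Fix a cofinal set `s ⊆ κ` of order type `cf κ`. Functions `s → κ` can be diagonalised against
any `κ` of them, `(g_x)_{x < κ}`: choosing `f i ∉ {g_x i | x < i}`, a set of size `< κ`, makes
`f` agree with `g_x` only at points `i ≤ x`, of which there are fewer than `cf κ`. A recursion of
length `κ⁺` therefore produces `κ⁺` functions any two of which agree on fewer than `cf κ` points,
and their graphs, as subsets of `s × κ ≃ κ`, form the family.
-/

theorem exists_pairwise_of_forall_mk_le_exists {X β : Type u} [LinearOrder β] [WellFoundedLT β]
    {κ : Cardinal.{u}} (hβ : ∀ b : β, #(Iio b) ≤ κ) {P : X → X → Prop} (hP : ∀ f g, P f g → P g f)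
    (hstep : ∀ S : Set X, #S ≤ κ → ∃ f, ∀ g ∈ S, P f g) :
    ∃ F : β → X, Pairwise fun a b ↦ P (F a) (F b) := by
  have hext : ∀ b (prev : ∀ a, a < b → X), ∃ f, ∀ a h, P f (prev a h) := fun b prev ↦ by
    obtain ⟨f, hf⟩ := hstep (range fun a : Iio b ↦ prev a.1 a.2) (mk_range_le.trans (hβ b))
    exact ⟨f, fun a h ↦ hf _ ⟨⟨a, h⟩, rfl⟩⟩
  choose next hnext using hext
  let F : β → X := wellFounded_lt.fix next
  have hF : ∀ b, F b = next b fun a _ ↦ F a := wellFounded_lt.fix_eq next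
  refine ⟨F, fun a b hab ↦ ?_⟩
  rcases hab.lt_or_gt with h | h
  · exact hP _ _ (hF b ▸ hnext b _ a h)
  · exact hF a ▸ hnext a _ b h

theorem exists_mk_eq_cof_forall_mk_le_lt {T : Type u} [LinearOrder T] [WellFoundedLT T]
    (hT : ℵ₀ ≤ Order.cof T) :
    ∃ s : Set T, #s = Order.cof T ∧ ∀ x : T, #{i : s | (i : T) ≤ x} < Order.cof T := by
  -- Having order type `cof T`, not merely size `cof T`, is what bounds the initial segments of `s`.
  obtain ⟨s, hs, hs_type⟩ := Ordinal.exists_ord_cof_eq T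
  have hs_mk : #s = Order.cof T := by
    rw [← Ordinal.card_type (α := s) (· < ·), hs_type, card_ord]
  refine ⟨s, hs_mk, fun x ↦ ?_⟩
  obtain ⟨j, hj, hxj⟩ := hs x
  calc #{i : s | (i : T) ≤ x} ≤ #(Iic (⟨j, hj⟩ : s)) :=
        mk_le_mk_of_subset fun i hi ↦ (mem_ofPred.1 hi).trans hxj
    _ < #s := mk_Iic_lt _ (by rw [hs_mk, hs_type]) (hs_mk ▸ hT)
    _ = Order.cof T := hs_mk

theorem exists_forall_mk_setOf_eq_lt {ι T : Type u} (C : ι → Set T) (hC : ∀ i, #(C i) < #T)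
    {μ : Cardinal} (hcov : ∀ x, #{i | x ∉ C i} < μ) (S : Set (ι → T)) (hS : #S ≤ #T) :
    ∃ f : ι → T, ∀ g ∈ S, #{i | f i = g i} < μ := by
  obtain ⟨j⟩ := hS
  have hmiss : ∀ i, ∃ y, y ∉ (fun g : S ↦ (g : ι → T) i) '' {g | j g ∈ C i} := fun i ↦ by
    refine (ne_univ_iff_exists_notMem _).1 fun h ↦ (hC i).not_ge ?_
    calc #T = #(univ : Set T) := mk_univ.symm
      _ ≤ #{g | j g ∈ C i} := h ▸ mk_image_le
      _ ≤ #(C i) := mk_le_of_injective (f := fun g ↦ ⟨j g.1, g.2⟩) fun g h hgh ↦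
        Subtype.ext (j.injective (congrArg Subtype.val hgh))
  choose f hf using hmiss
  refine ⟨f, fun g hg ↦ (mk_le_mk_of_subset fun i hi ↦ ?_).trans_lt (hcov (j ⟨g, hg⟩))⟩
  exact fun hgi ↦ hf i ⟨⟨g, hg⟩, hgi, (mem_ofPred.1 hi).symm⟩

theorem aleph0_le_cof_ord {c : Cardinal} (hc : ℵ₀ ≤ c) : ℵ₀ ≤ c.ord.cof :=
  Ordinal.aleph0_le_cof_iff.2 <| Ordinal.one_lt_cof_iff.2 (isSuccLimit_ord hc)

theorem exists_pairwise_mk_setOf_eq_lt_cof (κ : Cardinal.{u}) (hκ : ℵ₀ ≤ κ) :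
    ∃ s : Set κ.ord.ToType, #s = κ.ord.cof ∧ ∃ F : (Order.succ κ).ord.ToType → s → κ.ord.ToType,
      Pairwise fun a b ↦ #{i | F a i = F b i} < κ.ord.cof := by
  obtain ⟨s, hs, hs_bdd⟩ :=
    exists_mk_eq_cof_forall_mk_le_lt (Ordinal.cof_toType κ.ord ▸ aleph0_le_cof_ord hκ)
  rw [Ordinal.cof_toType] at hs hs_bdd
  refine ⟨s, hs, exists_pairwise_of_forall_mk_le_exists (κ := κ)
    (P := fun f g : s → κ.ord.ToType ↦ #{i | f i = g i} < κ.ord.cof) (fun b ↦ ?_)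
    (fun f g h ↦ by simpa only [eq_comm] using h) fun S hS ↦ ?_⟩
  · exact Order.lt_succ_iff.1 (by simpa using mk_Iio_lt b)
  · refine exists_forall_mk_setOf_eq_lt (fun i : s ↦ Iio (i : κ.ord.ToType))
      (fun i ↦ by simpa using mk_Iio_lt (i : κ.ord.ToType)) (fun x ↦ ?_) S (by simpa using hS)
    simpa only [mem_Iio, not_lt] using hs_bdd x

theorem mk_graphOn_univ_inter_graphOn_univ {ι T : Type u} (f g : ι → T) :
    #(univ.graphOn f ∩ univ.graphOn g : Set (ι × T)) = #{i | f i = g i} := by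
  have : univ.graphOn f ∩ univ.graphOn g = {i | f i = g i}.graphOn f := by
    ext ⟨i, y⟩
    simp only [mem_inter_iff, mem_graphOn, mem_univ, true_and, mem_ofPred]
    constructor
    · rintro ⟨rfl, h⟩; exact ⟨h.symm, rfl⟩
    · rintro ⟨h, rfl⟩; exact ⟨rfl, h.symm⟩
  rw [this, graphOn, mk_image_eq fun a b h ↦ congrArg Prod.fst h]

theorem exists_family_of_pairwise_mk_setOf_eq_lt {ι T X β : Type u} (E : ι × T ≃ X)
    {F : β → ι → T} {μ : Cardinal} (hμ : μ ≤ #ι)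
    (hF : Pairwise fun a b ↦ #{i | F a i = F b i} < μ) :
    ∃ 𝒜 : Set (Set X), #𝒜 = #β ∧ (∀ A ∈ 𝒜, #A = #ι) ∧
      ∀ A ∈ 𝒜, ∀ B ∈ 𝒜, A ≠ B → #(A ∩ B : Set X) < μ := by
  have hF_inj : Function.Injective F := fun a b hab ↦
    by_contra fun hne ↦ (hF hne).not_ge (by simpa [hab] using hμ)
  let A : β → Set X := fun b ↦ E '' univ.graphOn (F b)
  have hA : Function.Injective A :=
    (image_injective.2 E.injective).comp (graphOn_univ_injective.comp hF_inj)
  refine ⟨range A, mk_range_eq _ hA, ?_, ?_⟩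
  · rintro _ ⟨b, rfl⟩
    rw [mk_image_eq E.injective, graphOn, mk_image_eq fun a b h ↦ congrArg Prod.fst h, mk_univ]
  · rintro _ ⟨a, rfl⟩ _ ⟨b, rfl⟩ hne
    rw [← image_inter E.injective, mk_image_eq E.injective, mk_graphOn_univ_inter_graphOn_univ]
    exact hF fun h ↦ hne (h ▸ rfl)

theorem stmt17_general (κ : Cardinal) (hκ : ℵ₀ ≤ κ) :
    ∃ 𝒜 : Set (Set κ.out),
      #𝒜 = Order.succ κ ∧
      (∀ A ∈ 𝒜, #A = κ.ord.cof) ∧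
      (∀ A ∈ 𝒜, ∀ B ∈ 𝒜, A ≠ B → #(↥(A ∩ B)) < κ.ord.cof) := by
  obtain ⟨s, hs, F, hF⟩ := exists_pairwise_mk_setOf_eq_lt_cof κ hκ
  have hprod : #(s × κ.ord.ToType) = #κ.out := by
    rw [mk_prod, lift_id, lift_id, hs, mk_toType, card_ord, mk_out,
      mul_eq_right hκ (Ordinal.cof_ord_le κ) (aleph0_pos.trans_le (aleph0_le_cof_ord hκ)).ne']
  obtain ⟨E⟩ := Cardinal.eq.1 hprod
  obtain ⟨𝒜, h𝒜_mk, h𝒜_mem, h𝒜_inter⟩ := exists_family_of_pairwise_mk_setOf_eq_lt E hs.ge hF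
  refine ⟨𝒜, ?_, fun A hA ↦ hs ▸ h𝒜_mem A hA, h𝒜_inter⟩
  rw [h𝒜_mk, mk_toType, card_ord]

/-- Baumgartner: for every singular cardinal `κ` there is an almost disjoint family
`𝒜 ⊆ [κ]^{cf κ}` of size `κ⁺` with pairwise intersections of size `< cf κ`. -/
theorem stmt17 (κ : Cardinal) (hκ : ℵ₀ ≤ κ) (hsing : κ.ord.cof < κ) :
    ∃ 𝒜 : Set (Set κ.out),
      #𝒜 = Order.succ κ ∧
      (∀ A ∈ 𝒜, #A = κ.ord.cof) ∧
      (∀ A ∈ 𝒜, ∀ B ∈ 𝒜, A ≠ B → #(↥(A ∩ B)) < κ.ord.cof) :=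
  stmt17_general κ hκ
end
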